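/- arXiv:1403.2284 — 3 statements merged into one kernel-verified Lean document; each statement's English description precedes it below -/
import Mathlib

section
/- Let n ≥ 1, let a > 0, and let f : ℝ → [0,∞] be a measurable function. Let P : ℝⁿ → ℝ be given by P(x) = ∏_{i=1}^n |x_i|, and let X_a = {x ∈ ℝⁿ : there exists i with |x_i| < a}. Then, as an identity in [0,∞] for Lebesgue integrals, ∫_{ℝⁿ \ X_a} f(P(x)) dx = (2ⁿ/(n−1)!) ∫_{aⁿ}^∞ f(p) (log(p/aⁿ))^{n−1} dp. -/
/-!
Peel off one coordinate at a time. By Fubini and induction, the integral over the slab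
complement in dimension `k + 2` becomes `2 · cₖ ∫_{t>a} ∫_{p>b} f(tp) log(p/b)ᵏ dp dt`, where
`b = aᵏ⁺¹` and `cₖ = 2ᵏ⁺¹/k!`. Substituting `q = tp` and exchanging the order of integration
turns this into `∫_{q>ab} f(q) ∫_a^{q/b} log(q/(bt))ᵏ dt/t dq`, and the inner integral is
`log(q/(ab))ᵏ⁺¹/(k+1)`.
-/

open MeasureTheory Set Real

theorem lintegral_pi_eq_lintegral_lintegral_cons {n : ℕ} {α : Type*}
    [MeasurableSpace α] (μ : Fin (n + 1) → Measure α) [∀ i, SigmaFinite (μ i)]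
    {g : (Fin (n + 1) → α) → ENNReal} (hg : Measurable g) :
    ∫⁻ x, g x ∂Measure.pi μ =
      ∫⁻ t, ∫⁻ y, g (Fin.cons t y) ∂Measure.pi (fun j => μ j.succ) ∂μ 0 := by
  rw [← ((measurePreserving_piFinSuccAbove μ 0).symm).lintegral_comp_emb
    (MeasurableEquiv.measurableEmbedding _)]
  refine (lintegral_prod _ (hg.comp (MeasurableEquiv.measurable _)).aemeasurable).trans ?_
  simp [MeasurableEquiv.piFinSuccAbove, Fin.insertNthEquiv_zero, Fin.consEquiv]

theorem lintegral_lintegral_preimage_swap {α β : Type*} [MeasurableSpace α] [MeasurableSpace β]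
    {μ : Measure α} {ν : Measure β} [SFinite μ] [SFinite ν] {S : Set (α × β)}
    (hS : MeasurableSet S) {G : α → β → ENNReal}
    (hG : AEMeasurable (Function.uncurry G) (μ.prod ν)) :
    ∫⁻ x, ∫⁻ y in Prod.mk x ⁻¹' S, G x y ∂ν ∂μ =
      ∫⁻ y, ∫⁻ x in (fun x => (x, y)) ⁻¹' S, G x y ∂μ ∂ν := by
  simp_rw [← lintegral_indicator (measurable_prodMk_left hS),
    ← lintegral_indicator (measurable_prodMk_right hS)]
  exact lintegral_lintegral_swap (hG.indicator hS)

theorem setLIntegral_le_abs_comp_abs {a : ℝ} (ha : 0 < a) (g : ℝ → ENNReal) :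
    ∫⁻ t in {t : ℝ | a ≤ |t|}, g |t| = 2 * ∫⁻ t in Ioi a, g t := by
  have hsplit : {t : ℝ | a ≤ |t|} = Iic (-a) ∪ Ici a := by
    ext t
    simp only [mem_ofPred_eq, mem_union, mem_Iic, mem_Ici, le_abs, le_neg]
    tauto
  have hneg : ∫⁻ t in Iic (-a), g |t| = ∫⁻ t in Ici a, g |t| := by
    simpa [abs_neg] using (Measure.measurePreserving_neg volume).setLIntegral_comp_preimage_emb
      (MeasurableEquiv.neg ℝ).measurableEmbedding (fun t => g |t|) (Ici a)
  have habs : ∫⁻ t in Ici a, g |t| = ∫⁻ t in Ioi a, g t := by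
    rw [Measure.restrict_congr_set Ioi_ae_eq_Ici.symm]
    exact setLIntegral_congr_fun measurableSet_Ioi fun t ht => by
      rw [abs_of_pos (ha.trans ht)]
  rw [hsplit, lintegral_union measurableSet_Ici (Iic_disjoint_Ici.2 (by linarith)), hneg, habs,
    two_mul]

theorem setLIntegral_Ioi_comp_mul_left {c : ℝ} (hc : 0 < c) (b : ℝ) (g : ℝ → ENNReal) :
    ∫⁻ p in Ioi b, g (c * p) = ENNReal.ofReal c⁻¹ * ∫⁻ q in Ioi (c * b), g q := by
  have hemb : MeasurableEmbedding (c * ·) :=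
    (Homeomorph.mulLeft₀ c hc.ne').toMeasurableEquiv.measurableEmbedding
  have hpre : (c * ·) ⁻¹' Ioi (c * b) = Ioi b := by
    ext p
    simp [mul_lt_mul_iff_right₀ hc]
  rw [← abs_of_pos (inv_pos.2 hc), ← smul_eq_mul, ← lintegral_smul_measure,
    ← Measure.restrict_smul, ← Real.map_volume_mul_left hc.ne',
    Measure.restrict_map hemb.measurable measurableSet_Ioi, hpre, hemb.lintegral_map]

theorem hasDerivAt_log_sub_log_pow_succ {c t : ℝ} (ht : t ≠ 0) (k : ℕ) :
    HasDerivAt (fun t => -((log c - log t) ^ (k + 1) / (k + 1)))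
      (t⁻¹ * (log c - log t) ^ k) t := by
  have hbase : HasDerivAt (fun t => log c - log t) (0 - t⁻¹) t :=
    (hasDerivAt_const t _).sub (hasDerivAt_log ht)
  refine ((hbase.pow (k + 1)).div_const ((k : ℝ) + 1)).neg.congr_deriv ?_
  have hk : (k : ℝ) + 1 ≠ 0 := by positivity
  push_cast
  field_simp
  ring

theorem setLIntegral_Ioo_inv_mul_log_div_pow {a c : ℝ} (ha : 0 < a) (hac : a < c) (k : ℕ) :
    ∫⁻ t in Ioo a c, ENNReal.ofReal t⁻¹ * ENNReal.ofReal (log (c / t) ^ k) =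
      ENNReal.ofReal (log (c / a) ^ (k + 1) / (k + 1)) := by
  have hpos : ∀ t ∈ Icc a c, 0 < t := fun t ht => ha.trans_le ht.1
  set φ : ℝ → ℝ := fun t => t⁻¹ * (log c - log t) ^ k
  have hφ_int : IntegrableOn φ (Icc a c) :=
    ((continuousOn_inv₀.mono fun t ht => (hpos t ht).ne').mul
      ((continuousOn_const.sub (continuousOn_log.mono fun t ht => (hpos t ht).ne')).pow k))
      |>.integrableOn_Icc
  have hφ_nonneg : ∀ t ∈ Ioo a c, 0 ≤ φ t := fun t ht =>
    mul_nonneg (inv_nonneg.2 (ha.trans ht.1).le)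
      (pow_nonneg (sub_nonneg.2 (log_le_log (ha.trans ht.1) ht.2.le)) k)
  have hFTC : ∫ t in Ioo a c, φ t = (log c - log a) ^ (k + 1) / (k + 1) := by
    rw [← integral_Ioc_eq_integral_Ioo, ← intervalIntegral.integral_of_le hac.le,
      intervalIntegral.integral_eq_sub_of_hasDerivAt
        (fun t ht => hasDerivAt_log_sub_log_pow_succ
          (hpos t (uIcc_of_le hac.le ▸ ht)).ne' k)
        ((intervalIntegrable_iff_integrableOn_Icc_of_le hac.le).2 hφ_int)]
    simp
  calc ∫⁻ t in Ioo a c, ENNReal.ofReal t⁻¹ * ENNReal.ofReal (log (c / t) ^ k)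
      = ∫⁻ t in Ioo a c, ENNReal.ofReal (φ t) :=
        setLIntegral_congr_fun measurableSet_Ioo fun t ht => by
          rw [log_div (ha.trans hac).ne' (ha.trans ht.1).ne',
            ← ENNReal.ofReal_mul (inv_nonneg.2 (ha.trans ht.1).le)]
    _ = ENNReal.ofReal (∫ t in Ioo a c, φ t) :=
        (ofReal_integral_eq_lintegral_ofReal (hφ_int.mono_set Ioo_subset_Icc_self)
          ((ae_restrict_iff' measurableSet_Ioo).2 (ae_of_all _ hφ_nonneg))).symm
    _ = ENNReal.ofReal (log (c / a) ^ (k + 1) / (k + 1)) := by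
        rw [hFTC, log_div (ha.trans hac).ne' ha.ne']

theorem setLIntegral_Ioi_lintegral_comp_mul {a b : ℝ} (ha : 0 ≤ a) (hb : 0 < b)
    {f h : ℝ → ENNReal} (hf : Measurable f) (hh : Measurable h) :
    ∫⁻ t in Ioi a, ∫⁻ p in Ioi b, f (t * p) * h p =
      ∫⁻ q, f q * ∫⁻ t in Ioo a (q / b), ENNReal.ofReal t⁻¹ * h (q / t) := by
  set S : Set (ℝ × ℝ) := {z | z.1 * b < z.2}
  have hS : MeasurableSet S := measurableSet_lt (by fun_prop) measurable_snd
  calc ∫⁻ t in Ioi a, ∫⁻ p in Ioi b, f (t * p) * h p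
      = ∫⁻ t in Ioi a, ∫⁻ q in Prod.mk t ⁻¹' S,
          ENNReal.ofReal t⁻¹ * (f q * h (q / t)) :=
        setLIntegral_congr_fun measurableSet_Ioi fun t ht => by
          have ht : 0 < t := ha.trans_lt ht
          rw [lintegral_const_mul' _ _ ENNReal.ofReal_ne_top]
          change _ = _ * ∫⁻ q in Ioi (t * b), f q * h (q / t)
          rw [← setLIntegral_Ioi_comp_mul_left ht]
          simp_rw [mul_div_cancel_left₀ _ ht.ne']
    _ = ∫⁻ q, ∫⁻ t in (·, q) ⁻¹' S, ENNReal.ofReal t⁻¹ * (f q * h (q / t))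
          ∂volume.restrict (Ioi a) :=
        lintegral_lintegral_preimage_swap hS (by fun_prop)
    _ = ∫⁻ q, f q * ∫⁻ t in Ioo a (q / b), ENNReal.ofReal t⁻¹ * h (q / t) := by
        refine lintegral_congr fun q => ?_
        have hsection : (·, q) ⁻¹' S ∩ Ioi a = Ioo a (q / b) := by
          ext t
          simp [S, lt_div_iff₀ hb, and_comm]
        rw [Measure.restrict_restrict (hS.preimage (by fun_prop)), hsection,
          ← lintegral_const_mul _ (by fun_prop)]
        simp_rw [mul_left_comm]

theorem natCast_succ_mul_setLIntegral_Ioi_lintegral_log_div_pow {a b : ℝ} (ha : 0 < a)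
    (hb : 0 < b) {f : ℝ → ENNReal} (hf : Measurable f) (k : ℕ) :
    (k + 1 : ENNReal) *
        ∫⁻ t in Ioi a, ∫⁻ p in Ioi b, f (t * p) * ENNReal.ofReal (log (p / b) ^ k) =
      ∫⁻ q in Ioi (a * b), f q * ENNReal.ofReal (log (q / (a * b)) ^ (k + 1)) := by
  rw [setLIntegral_Ioi_lintegral_comp_mul ha.le hb hf (by fun_prop),
    ← lintegral_const_mul' _ _ (by simp), ← lintegral_indicator measurableSet_Ioi]
  refine lintegral_congr fun q => ?_
  by_cases hq : a * b < q
  · have hab : a < q / b := (lt_div_iff₀ hb).2 hq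
    simp_rw [indicator_of_mem (mem_Ioi.2 hq), div_right_comm _ _ b,
      setLIntegral_Ioo_inv_mul_log_div_pow ha hab k, div_div, mul_comm b a, mul_left_comm _ (f q)]
    congr 1
    rw [← ENNReal.ofReal_natCast, ← ENNReal.ofReal_one,
      ← ENNReal.ofReal_add (by positivity) zero_le_one, ← ENNReal.ofReal_mul (by positivity)]
    field_simp
  · rw [Ioo_eq_empty fun hab => hq ((lt_div_iff₀ hb).1 hab), Measure.restrict_empty,
      lintegral_zero_measure, mul_zero, mul_zero, indicator_of_notMem (mt mem_Ioi.1 hq)]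

theorem two_pow_div_factorial_mul_two (k : ℕ) :
    (2 ^ (k + 1) / k.factorial : ENNReal) * 2 = 2 ^ (k + 2) / (k + 1).factorial * (k + 1) := by
  have hk : (k + 1 : ENNReal) ≠ 0 := by positivity
  rw [Nat.factorial_succ, Nat.cast_mul, Nat.cast_succ, div_eq_mul_inv, div_eq_mul_inv,
    ENNReal.mul_inv (Or.inl hk) (Or.inl (by simp)),
    show (2 : ENNReal) ^ (k + 2) * (((k : ENNReal) + 1)⁻¹ * (k.factorial : ENNReal)⁻¹) *
        (k + 1) = 2 ^ (k + 2) * (k.factorial : ENNReal)⁻¹ * (((k : ENNReal) + 1)⁻¹ * (k + 1))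
      by ring,
    ENNReal.inv_mul_cancel hk (by simp)]
  ring

theorem lintegral_prod_abs_pi_restrict_le_abs {a : ℝ} (ha : 0 < a) {f : ℝ → ENNReal}
    (hf : Measurable f) (k : ℕ) :
    ∫⁻ x, f (∏ i, |x i|)
        ∂Measure.pi (fun _ : Fin (k + 1) => volume.restrict {t : ℝ | a ≤ |t|}) =
      2 ^ (k + 1) / k.factorial *
        ∫⁻ p in Ioi (a ^ (k + 1)), f p * ENNReal.ofReal (log (p / a ^ (k + 1)) ^ k) := by
  induction k generalizing f with
  | zero =>
    rw [lintegral_pi_eq_lintegral_lintegral_cons _ (by fun_prop)]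
    simp [lintegral_unique, setLIntegral_le_abs_comp_abs ha]
  | succ k ih =>
    rw [lintegral_pi_eq_lintegral_lintegral_cons _ (by fun_prop)]
    have hcons : ∀ (t : ℝ) (y : Fin (k + 1) → ℝ),
        ∏ i, |(Fin.cons t y : Fin (k + 2) → ℝ) i| = |t| * ∏ i, |y i| := fun t y => by
      rw [Fin.prod_univ_succ, Fin.cons_zero]
      simp only [Fin.cons_succ]
    simp_rw [hcons]
    rw [lintegral_congr fun t => ih (f := fun u => f (|t| * u)) (by fun_prop),
      lintegral_const_mul' _ _ (ENNReal.div_ne_top (by simp) (by simp [Nat.factorial_ne_zero])),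
      setLIntegral_le_abs_comp_abs ha (fun u =>
        ∫⁻ p in Ioi (a ^ (k + 1)), f (u * p) * ENNReal.ofReal (log (p / a ^ (k + 1)) ^ k)),
      pow_succ' a (k + 1),
      ← natCast_succ_mul_setLIntegral_Ioi_lintegral_log_div_pow ha (pow_pos ha _) hf k,
      ← mul_assoc, two_pow_div_factorial_mul_two, mul_assoc]

/-- Lemma 4 of the paper: for `P(x) = ∏ |x_i|` and `X_a = {x : ∃ i, |x_i| < a}`,
`∫_{ℝⁿ \ X_a} f(P(x)) dx = (2ⁿ/(n-1)!) ∫_{aⁿ}^∞ f(p) (log (p/aⁿ))^{n-1} dp`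
as an identity of Lebesgue integrals in `[0,∞]`. -/
theorem integral_product_complement_slab
    (n : ℕ) (hn : 1 ≤ n) (a : ℝ) (ha : 0 < a)
    (f : ℝ → ENNReal) (hf : Measurable f) :
    ∫⁻ x in {x : Fin n → ℝ | ∀ i, a ≤ |x i|}, f (∏ i, |x i|) =
      (2 ^ n / (Nat.factorial (n - 1) : ENNReal)) *
        ∫⁻ p in Set.Ioi (a ^ n), f p * ENNReal.ofReal (Real.log (p / a ^ n) ^ (n - 1)) := by
  obtain ⟨k, rfl⟩ : ∃ k, n = k + 1 := ⟨n - 1, by omega⟩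
  have hslab :
      {x : Fin (k + 1) → ℝ | ∀ i, a ≤ |x i|} = univ.pi fun _ => {t : ℝ | a ≤ |t|} := by
    ext
    simp
  rw [hslab, volume_pi, Measure.restrict_pi_pi, lintegral_prod_abs_pi_restrict_le_abs ha hf k,
    Nat.add_sub_cancel]
end

section
/- Let n ≥ 2 and α_1, …, α_n > 0. Then for every smooth compactly supported u : ℝⁿ → ℂ, ∫_{ℝⁿ} ( ‖∇u(x)‖² + ∏_{j=1}^n |x_j|^{α_j}·|u(x)|² ) dx ≥ ∫_{ℝⁿ} ( ∑_{j=2}^n |∂_j u(x)|² + λ₀(α_1)·(∏_{j=2}^n |x_j|^{α_j})^{2/(2+α_1)}·|u(x)|² ) dx, where ∂_j denotes the partial derivative in the j-th coordinate. -/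
open MeasureTheory

open Topology

/-- The bottom of the spectrum of the one-dimensional Schrödinger operator
`−d²/dx² + |x|^ν`, defined variationally as the infimum of Rayleigh quotients over
nonzero smooth compactly supported functions. -/
noncomputable def lambda0 (ν : ℝ) : ℝ :=
  sInf {r : ℝ | ∃ v : ℝ → ℂ, ContDiff ℝ (⊤ : ℕ∞) v ∧ HasCompactSupport v ∧ v ≠ 0 ∧
    r = (∫ x : ℝ, (‖deriv v x‖ ^ 2 + |x| ^ ν * ‖v x‖ ^ 2)) / ∫ x : ℝ, ‖v x‖ ^ 2}

lemma lambda0_bddBelow (ν : ℝ) :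
    BddBelow {r : ℝ | ∃ v : ℝ → ℂ, ContDiff ℝ (⊤ : ℕ∞) v ∧ HasCompactSupport v ∧ v ≠ 0 ∧
      r = (∫ x : ℝ, (‖deriv v x‖ ^ 2 + |x| ^ ν * ‖v x‖ ^ 2)) / ∫ x : ℝ, ‖v x‖ ^ 2} := by
  refine ⟨0, ?_⟩
  rintro r ⟨v, -, -, -, rfl⟩
  apply div_nonneg
  · apply integral_nonneg
    intro x
    have h1 : (0:ℝ) ≤ |x| ^ ν := Real.rpow_nonneg (abs_nonneg x) ν
    positivity
  · exact integral_nonneg fun x => by positivity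
section aux
variable {v : ℝ → ℂ}

lemma int_deriv_sq (hv : ContDiff ℝ (⊤ : ℕ∞) v) (hsv : HasCompactSupport v) :
    Integrable (fun t : ℝ => ‖deriv v t‖ ^ 2) := by
  apply Continuous.integrable_of_hasCompactSupport
  · exact ((hv.continuous_deriv (by simp)).norm).pow 2
  · exact (hsv.deriv.comp_left (g := fun z : ℂ => ‖z‖ ^ 2) (by simp) :)

lemma int_sq (hv : ContDiff ℝ (⊤ : ℕ∞) v) (hsv : HasCompactSupport v) :
    Integrable (fun t : ℝ => ‖v t‖ ^ 2) := by
  apply Continuous.integrable_of_hasCompactSupport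
  · exact (hv.continuous.norm).pow 2
  · exact (hsv.comp_left (g := fun z : ℂ => ‖z‖ ^ 2) (by simp) :)

lemma int_pot_sq {ν : ℝ} (hν : 0 < ν) (hv : ContDiff ℝ (⊤ : ℕ∞) v) (hsv : HasCompactSupport v) :
    Integrable (fun t : ℝ => |t| ^ ν * ‖v t‖ ^ 2) := by
  apply Continuous.integrable_of_hasCompactSupport
  · exact (continuous_abs.rpow_const (fun x => Or.inr hν.le)).mul ((hv.continuous.norm).pow 2)
  · exact ((hsv.comp_left (g := fun z : ℂ => ‖z‖ ^ 2) (by simp) :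
      HasCompactSupport fun t => ‖v t‖ ^ 2).mul_left :)

end aux

lemma one_dim {ν : ℝ} (hν : 0 < ν) {c : ℝ} (hc : 0 ≤ c) {v : ℝ → ℂ}
    (hv : ContDiff ℝ (⊤ : ℕ∞) v) (hsv : HasCompactSupport v) :
    lambda0 ν * c ^ (2 / (2 + ν)) * ∫ t : ℝ, ‖v t‖ ^ 2
      ≤ ∫ t : ℝ, (‖deriv v t‖ ^ 2 + |t| ^ ν * c * ‖v t‖ ^ 2) := by
  have hp : (0:ℝ) < 2 + ν := by linarith
  have hθ : 0 < 2 / (2 + ν) := by positivity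
  rcases eq_or_lt_of_le hc with hc0 | hc0
  · rw [← hc0, Real.zero_rpow (ne_of_gt hθ), mul_zero, zero_mul]
    apply integral_nonneg
    intro t
    have h1 : (0:ℝ) ≤ |t| ^ ν := Real.rpow_nonneg (abs_nonneg t) ν
    positivity
  set D := ∫ t : ℝ, ‖v t‖ ^ 2 with hD
  have hDnn : 0 ≤ D := integral_nonneg fun t => by positivity
  rcases eq_or_lt_of_le hDnn with hD0 | hD0
  · rw [← hD0, mul_zero]
    apply integral_nonneg
    intro t
    have h1 : (0:ℝ) ≤ |t| ^ ν := Real.rpow_nonneg (abs_nonneg t) ν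
    positivity
  have hvne : v ≠ 0 := by
    intro h
    rw [hD, h] at hD0
    simp at hD0
  set s : ℝ := c ^ (-(1 / (2 + ν))) with hs
  have hspos : 0 < s := Real.rpow_pos_of_pos hc0 _
  have hsinv : s⁻¹ = c ^ (1 / (2 + ν)) := by
    rw [hs, Real.rpow_neg hc, inv_inv]
  set w : ℝ → ℂ := fun t => v (s * t) with hw
  have hwC : ContDiff ℝ (⊤ : ℕ∞) w := hv.comp (contDiff_const.mul contDiff_id)
  have hwS : HasCompactSupport w := by
    have h := hsv.comp_homeomorph (Homeomorph.mulLeft₀ s hspos.ne')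
    simpa [Function.comp_def, Homeomorph.coe_mulLeft₀] using h
  have hwne : w ≠ 0 := by
    obtain ⟨t0, ht0⟩ := Function.ne_iff.mp hvne
    intro h
    apply ht0
    have h2 := congrFun h (s⁻¹ * t0)
    simp only [hw, Pi.zero_apply, mul_inv_cancel_left₀ hspos.ne'] at h2
    simpa using h2
  have hder : ∀ t : ℝ, deriv w t = s • deriv v (s * t) := by
    intro t
    have h1 : HasDerivAt v (deriv v (s * t)) (s * t) :=
      ((hv.differentiable (by simp)) (s * t)).hasDerivAt
    have h2 : HasDerivAt (fun t : ℝ => s * t) s t := by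
      simpa using (hasDerivAt_id t).const_mul s
    have h3 := HasDerivAt.scomp (x := t) (h := fun u : ℝ => s * u) h1 h2
    exact h3.deriv
  set A := ∫ t : ℝ, ‖deriv v t‖ ^ 2 with hA
  set B := ∫ t : ℝ, |t| ^ ν * ‖v t‖ ^ 2 with hB
  have habs : |s⁻¹| = s⁻¹ := abs_of_pos (inv_pos.mpr hspos)
  have hI1 : (∫ t : ℝ, ‖deriv w t‖ ^ 2) = s * A := by
    have h1 : (fun t : ℝ => ‖deriv w t‖ ^ 2)
        = fun t => s ^ 2 * (fun y => ‖deriv v y‖ ^ 2) (s * t) := by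
      funext t
      rw [hder t, norm_smul, mul_pow, Real.norm_eq_abs, abs_of_pos hspos]
    rw [h1, MeasureTheory.integral_const_mul, MeasureTheory.Measure.integral_comp_mul_left
      (fun y => ‖deriv v y‖ ^ 2) s, smul_eq_mul, habs, ← hA]
    field_simp
  have hI2 : (∫ t : ℝ, |t| ^ ν * ‖w t‖ ^ 2) = s⁻¹ * (s⁻¹) ^ ν * B := by
    have h1 : (fun t : ℝ => |t| ^ ν * ‖w t‖ ^ 2)
        = fun t => (s⁻¹) ^ ν * (fun y => |y| ^ ν * ‖v y‖ ^ 2) (s * t) := by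
      funext t
      simp only [hw]
      rw [abs_mul, abs_of_pos hspos, Real.mul_rpow hspos.le (abs_nonneg t)]
      rw [← mul_assoc, ← mul_assoc, ← Real.mul_rpow (inv_pos.mpr hspos).le hspos.le,
        inv_mul_cancel₀ hspos.ne', Real.one_rpow, one_mul]
    rw [h1, MeasureTheory.integral_const_mul, MeasureTheory.Measure.integral_comp_mul_left
      (fun y => |y| ^ ν * ‖v y‖ ^ 2) s, smul_eq_mul, habs, ← hB]
    ring
  have hI3 : (∫ t : ℝ, ‖w t‖ ^ 2) = s⁻¹ * D := by
    have h1 : (fun t : ℝ => ‖w t‖ ^ 2) = fun t => (fun y => ‖v y‖ ^ 2) (s * t) := rfl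
    rw [h1, MeasureTheory.Measure.integral_comp_mul_left (fun y => ‖v y‖ ^ 2) s, smul_eq_mul, habs, ← hD]
  have hI3pos : 0 < s⁻¹ * D := mul_pos (inv_pos.mpr hspos) hD0
  have hNsplit : (∫ t : ℝ, (‖deriv w t‖ ^ 2 + |t| ^ ν * ‖w t‖ ^ 2))
      = s * A + s⁻¹ * (s⁻¹) ^ ν * B := by
    rw [integral_add (int_deriv_sq hwC hwS) (int_pot_sq hν hwC hwS), hI1, hI2]
  have hle : lambda0 ν ≤ (s * A + s⁻¹ * (s⁻¹) ^ ν * B) / (s⁻¹ * D) := by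
    rw [← hNsplit, ← hI3]
    exact csInf_le (lambda0_bddBelow ν) ⟨w, hwC, hwS, hwne, rfl⟩
  have key : lambda0 ν * (s⁻¹ * D) ≤ s * A + s⁻¹ * (s⁻¹) ^ ν * B :=
    (le_div_iff₀ hI3pos).mp hle
  have e1 : s⁻¹ * s⁻¹ = c ^ (2 / (2 + ν)) := by
    rw [hsinv, ← Real.rpow_add hc0, ← add_div]
    norm_num
  have e2 : s⁻¹ * (s⁻¹ * (s⁻¹) ^ ν) = c := by
    have hexp : 1 / (2 + ν) + (1 / (2 + ν) + 1 / (2 + ν) * ν) = 1 := by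
      field_simp
      ring
    rw [hsinv, ← Real.rpow_mul hc, ← Real.rpow_add hc0, ← Real.rpow_add hc0, hexp,
      Real.rpow_one]
  have main : lambda0 ν * c ^ (2 / (2 + ν)) * D ≤ A + c * B := by
    have h2 := mul_le_mul_of_nonneg_left key (inv_pos.mpr hspos).le
    calc lambda0 ν * c ^ (2 / (2 + ν)) * D = s⁻¹ * (lambda0 ν * (s⁻¹ * D)) := by
          rw [← e1]; ring
      _ ≤ s⁻¹ * (s * A + s⁻¹ * (s⁻¹) ^ ν * B) := h2
      _ = (s⁻¹ * s) * A + (s⁻¹ * (s⁻¹ * (s⁻¹) ^ ν)) * B := by ring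
      _ = A + c * B := by rw [inv_mul_cancel₀ hspos.ne', e2, one_mul]
  have hfin : (∫ t : ℝ, (‖deriv v t‖ ^ 2 + |t| ^ ν * c * ‖v t‖ ^ 2)) = A + c * B := by
    have h1 : (fun t : ℝ => ‖deriv v t‖ ^ 2 + |t| ^ ν * c * ‖v t‖ ^ 2)
        = fun t => ‖deriv v t‖ ^ 2 + c * (|t| ^ ν * ‖v t‖ ^ 2) := by
      funext t; ring
    rw [h1, integral_add (int_deriv_sq hv hsv) ((int_pot_sq hν hv hsv).const_mul c),
      MeasureTheory.integral_const_mul, ← hA, ← hB]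
  rw [hfin]
  exact main

section infra
variable {m : ℕ}

/-- The homeomorphism `(t, y) ↦ Fin.cons t y`. -/
def consHomeo (m : ℕ) : (ℝ × (Fin m → ℝ)) ≃ₜ (Fin (m + 1) → ℝ) where
  toEquiv :=
  { toFun := fun p => Fin.cons p.1 p.2
    invFun := fun x => (x 0, fun j => x j.succ)
    left_inv := fun p => by simp
    right_inv := fun x => Fin.cons_self_tail x }
  continuous_toFun := by
    apply continuous_pi
    intro i
    induction i using Fin.cases with
    | zero => simpa using continuous_fst
    | succ j => simpa using (continuous_apply j).comp' continuous_snd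
  continuous_invFun :=
    (continuous_apply 0).prodMk (continuous_pi fun j => continuous_apply _)

lemma cons_eq_affine (y : Fin m → ℝ) :
    (fun t : ℝ => (Fin.cons t y : Fin (m + 1) → ℝ))
      = fun t : ℝ => (Fin.cons 0 y : Fin (m + 1) → ℝ) + t • (Pi.single (0 : Fin (m + 1)) (1:ℝ) : Fin (m + 1) → ℝ) := by
  funext t
  funext i
  induction i using Fin.cases with
  | zero => simp
  | succ j => simp [Pi.single_eq_of_ne (Fin.succ_ne_zero j)]

lemma contDiff_consMap (y : Fin m → ℝ) :
    ContDiff ℝ (⊤ : ℕ∞) (fun t : ℝ => (Fin.cons t y : Fin (m + 1) → ℝ)) := by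
  rw [cons_eq_affine]
  exact contDiff_const.add (contDiff_id.smul contDiff_const)

lemma hasDerivAt_consMap (y : Fin m → ℝ) (t : ℝ) :
    HasDerivAt (fun t : ℝ => (Fin.cons t y : Fin (m + 1) → ℝ))
      (Pi.single (0 : Fin (m + 1)) 1) t := by
  rw [cons_eq_affine]
  have h := ((hasDerivAt_id t).smul_const
    (Pi.single (0 : Fin (m + 1)) (1 : ℝ))).const_add (Fin.cons 0 y : Fin (m + 1) → ℝ)
  simpa using h

lemma isClosedEmbedding_consMap (y : Fin m → ℝ) :
    IsClosedEmbedding (fun t : ℝ => (Fin.cons t y : Fin (m + 1) → ℝ)) :=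
  Function.LeftInverse.isClosedEmbedding (f := fun x : Fin (m + 1) → ℝ => x 0)
    (fun t => by simp) (continuous_apply 0) (contDiff_consMap y).continuous

lemma integrable_cons (G : (Fin (m + 1) → ℝ) → ℝ) (hG : Continuous G)
    (hGs : HasCompactSupport G) :
    Integrable (fun p : ℝ × (Fin m → ℝ) => G (Fin.cons p.1 p.2)) :=
  (hG.comp (consHomeo m).continuous).integrable_of_hasCompactSupport
    (hGs.comp_homeomorph (consHomeo m))

lemma integrable_cons_swap (G : (Fin (m + 1) → ℝ) → ℝ) (hG : Continuous G)
    (hGs : HasCompactSupport G) :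
    Integrable (fun p : (Fin m → ℝ) × ℝ => G (Fin.cons p.2 p.1)) :=
  (hG.comp ((Homeomorph.prodComm _ _).trans (consHomeo m)).continuous).integrable_of_hasCompactSupport
    (hGs.comp_homeomorph ((Homeomorph.prodComm _ _).trans (consHomeo m)))

lemma integral_cons_eq (G : (Fin (m + 1) → ℝ) → ℝ) (hG : Continuous G)
    (hGs : HasCompactSupport G) :
    (∫ x : Fin (m + 1) → ℝ, G x) = ∫ y : Fin m → ℝ, ∫ t : ℝ, G (Fin.cons t y) := by
  have mp := (MeasureTheory.volume_preserving_piFinSuccAbove (fun _ : Fin (m + 1) => ℝ) 0).symm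
  have h0 : ∀ p : ℝ × (Fin m → ℝ),
      ((MeasurableEquiv.piFinSuccAbove (fun _ : Fin (m + 1) => ℝ) 0).symm p : Fin (m + 1) → ℝ)
        = Fin.cons p.1 p.2 := by
    intro p
    simp [MeasurableEquiv.piFinSuccAbove_symm_apply, Fin.insertNth_zero', Fin.consEquiv]
  have hint : Integrable (fun p : ℝ × (Fin m → ℝ) => G (Fin.cons p.1 p.2))
      ((volume : Measure ℝ).prod (volume : Measure (Fin m → ℝ))) := by
    rw [← Measure.volume_eq_prod]
    exact integrable_cons G hG hGs
  have h2 : (∫ p : ℝ × (Fin m → ℝ), G (Fin.cons p.1 p.2)) = ∫ x : Fin (m + 1) → ℝ, G x := by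
    rw [show (fun p : ℝ × (Fin m → ℝ) => G (Fin.cons p.1 p.2))
        = fun p => G ((MeasurableEquiv.piFinSuccAbove (fun _ : Fin (m + 1) => ℝ) 0).symm p)
      from funext fun p => by rw [h0]]
    exact mp.integral_comp (MeasurableEquiv.measurableEmbedding _) G
  rw [← h2, Measure.volume_eq_prod, integral_prod _ hint]
  exact integral_integral_swap hint

lemma integrable_slice_int (G : (Fin (m + 1) → ℝ) → ℝ) (hG : Continuous G)
    (hGs : HasCompactSupport G) :
    Integrable (fun y : Fin m → ℝ => ∫ t : ℝ, G (Fin.cons t y)) := by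
  have h := integrable_cons_swap G hG hGs
  rw [Measure.volume_eq_prod] at h
  exact h.integral_prod_left

end infra

/-- Quadratic-form inequality
`−Δ + |x₁|^{α₁}∏_{j≥2}|x_j|^{α_j} ≥ −Δ_{x₂,…,x_n} + λ₀(α₁)(∏_{j≥2}|x_j|^{α_j})^{2/(2+α₁)}`,
the key step in the proof that `H_n^α` has discrete spectrum. -/
theorem quadratic_form_lower_bound
    (n : ℕ) (hn : 2 ≤ n) (α : Fin n → ℝ) (hα : ∀ i, 0 < α i)
    (u : (Fin n → ℝ) → ℂ) (hu : ContDiff ℝ (⊤ : ℕ∞) u) (hsupp : HasCompactSupport u) :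
    ∫ x : Fin n → ℝ,
        ((∑ j, ‖fderiv ℝ u x (Pi.single j 1)‖ ^ 2)
          + (∏ j, |x j| ^ α j) * ‖u x‖ ^ 2)
      ≥
    ∫ x : Fin n → ℝ,
        ((∑ j ∈ Finset.univ.erase (⟨0, by omega⟩ : Fin n),
            ‖fderiv ℝ u x (Pi.single j 1)‖ ^ 2)
          + lambda0 (α ⟨0, by omega⟩) *
              (∏ j ∈ Finset.univ.erase (⟨0, by omega⟩ : Fin n), |x j| ^ α j)
                ^ (2 / (2 + α ⟨0, by omega⟩)) * ‖u x‖ ^ 2) := by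
  obtain ⟨m, rfl⟩ : ∃ m, n = m + 1 := ⟨n - 1, by omega⟩
  simp only [Fin.mk_zero]
  -- basic continuity / support facts
  have hfderiv_cont : Continuous (fderiv ℝ u) := hu.continuous_fderiv (by simp)
  have hD1c : ∀ j : Fin (m + 1),
      Continuous fun x : Fin (m + 1) → ℝ => ‖fderiv ℝ u x (Pi.single j 1)‖ ^ 2 :=
    fun j => ((hfderiv_cont.clm_apply continuous_const).norm).pow 2
  have hD1s : ∀ j : Fin (m + 1),
      HasCompactSupport fun x : Fin (m + 1) → ℝ => ‖fderiv ℝ u x (Pi.single j 1)‖ ^ 2 :=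
    fun j => ((hsupp.fderiv_apply ℝ (Pi.single j 1)).comp_left
      (g := fun z : ℂ => ‖z‖ ^ 2) (by simp) :)
  have hD1i : ∀ j : Fin (m + 1),
      Integrable fun x : Fin (m + 1) → ℝ => ‖fderiv ℝ u x (Pi.single j 1)‖ ^ 2 :=
    fun j => (hD1c j).integrable_of_hasCompactSupport (hD1s j)
  have husq_c : Continuous fun x : Fin (m + 1) → ℝ => ‖u x‖ ^ 2 := (hu.continuous.norm).pow 2
  have husq_s : HasCompactSupport fun x : Fin (m + 1) → ℝ => ‖u x‖ ^ 2 :=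
    (hsupp.comp_left (g := fun z : ℂ => ‖z‖ ^ 2) (by simp) :)
  have hPc : Continuous fun x : Fin (m + 1) → ℝ => ∏ j, |x j| ^ α j :=
    continuous_finset_prod _ fun j _ =>
      (continuous_abs.comp (continuous_apply j)).rpow_const fun x => Or.inr (hα j).le
  have hQc : Continuous fun x : Fin (m + 1) → ℝ =>
      ∏ j ∈ Finset.univ.erase (0 : Fin (m + 1)), |x j| ^ α j :=
    continuous_finset_prod _ fun j _ =>
      (continuous_abs.comp (continuous_apply j)).rpow_const fun x => Or.inr (hα j).le
  have hθnn : (0:ℝ) ≤ 2 / (2 + α 0) := by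
    have := (hα 0)
    positivity
  -- the two "extra" integrands
  set F : (Fin (m + 1) → ℝ) → ℝ := fun x =>
    ‖fderiv ℝ u x (Pi.single (0 : Fin (m + 1)) 1)‖ ^ 2 + (∏ j, |x j| ^ α j) * ‖u x‖ ^ 2
    with hF
  set G : (Fin (m + 1) → ℝ) → ℝ := fun x =>
    lambda0 (α 0) * (∏ j ∈ Finset.univ.erase (0 : Fin (m + 1)), |x j| ^ α j)
      ^ (2 / (2 + α 0)) * ‖u x‖ ^ 2 with hG
  have hFc : Continuous F := (hD1c 0).add (hPc.mul husq_c)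
  have hFs : HasCompactSupport F := (hD1s 0).add husq_s.mul_left
  have hFi : Integrable F := hFc.integrable_of_hasCompactSupport hFs
  have hGc : Continuous G :=
    (continuous_const.mul (hQc.rpow_const fun x => Or.inr hθnn)).mul husq_c
  have hGs : HasCompactSupport G := husq_s.mul_left
  have hGi : Integrable G := hGc.integrable_of_hasCompactSupport hGs
  have hSi : Integrable fun x : Fin (m + 1) → ℝ =>
      ∑ j ∈ Finset.univ.erase (0 : Fin (m + 1)), ‖fderiv ℝ u x (Pi.single j 1)‖ ^ 2 :=
    integrable_finset_sum _ fun j _ => hD1i j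
  -- split both integrals
  have EL : (∫ x : Fin (m + 1) → ℝ,
        ((∑ j, ‖fderiv ℝ u x (Pi.single j 1)‖ ^ 2) + (∏ j, |x j| ^ α j) * ‖u x‖ ^ 2))
      = (∫ x : Fin (m + 1) → ℝ,
          ∑ j ∈ Finset.univ.erase (0 : Fin (m + 1)), ‖fderiv ℝ u x (Pi.single j 1)‖ ^ 2)
        + ∫ x, F x := by
    rw [← integral_add hSi hFi]
    congr 1
    funext x
    rw [hF, ← Finset.add_sum_erase _ _ (Finset.mem_univ (0 : Fin (m + 1)))]
    ring
  have ER : (∫ x : Fin (m + 1) → ℝ,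
        ((∑ j ∈ Finset.univ.erase (0 : Fin (m + 1)), ‖fderiv ℝ u x (Pi.single j 1)‖ ^ 2)
          + lambda0 (α 0) * (∏ j ∈ Finset.univ.erase (0 : Fin (m + 1)), |x j| ^ α j)
              ^ (2 / (2 + α 0)) * ‖u x‖ ^ 2))
      = (∫ x : Fin (m + 1) → ℝ,
          ∑ j ∈ Finset.univ.erase (0 : Fin (m + 1)), ‖fderiv ℝ u x (Pi.single j 1)‖ ^ 2)
        + ∫ x, G x := integral_add hSi hGi
  rw [ge_iff_le, EL, ER]
  apply add_le_add_right
  -- Fubini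
  rw [integral_cons_eq F hFc hFs, integral_cons_eq G hGc hGs]
  apply integral_mono (integrable_slice_int G hGc hGs) (integrable_slice_int F hFc hFs)
  intro y
  -- the 1-d slice
  have hvC : ContDiff ℝ (⊤ : ℕ∞) (fun t : ℝ => u (Fin.cons t y)) := hu.comp (contDiff_consMap y)
  have hvS : HasCompactSupport (fun t : ℝ => u (Fin.cons t y)) :=
    hsupp.comp_isClosedEmbedding (isClosedEmbedding_consMap y)
  have hder : ∀ t : ℝ, fderiv ℝ u (Fin.cons t y) (Pi.single (0 : Fin (m + 1)) 1)
      = deriv (fun τ : ℝ => u (Fin.cons τ y)) t := by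
    intro t
    have h : HasDerivAt (u ∘ fun τ : ℝ => (Fin.cons τ y : Fin (m + 1) → ℝ))
        (fderiv ℝ u (Fin.cons t y) (Pi.single (0 : Fin (m + 1)) 1)) t :=
      HasFDerivAt.comp_hasDerivAt t
        (((hu.differentiable (by simp)) (Fin.cons t y)).hasFDerivAt)
        (hasDerivAt_consMap y t)
    exact h.deriv.symm
  set c : ℝ := ∏ j : Fin m, |y j| ^ α j.succ with hcdef
  have hc : 0 ≤ c := Finset.prod_nonneg fun j _ => Real.rpow_nonneg (abs_nonneg _) _
  have hQy : ∀ t : ℝ, (∏ j ∈ Finset.univ.erase (0 : Fin (m + 1)), |Fin.cons t y j| ^ α j) = c := by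
    intro t
    rw [Fin.univ_succ, Finset.erase_cons, Finset.prod_map]
    simp [Fin.cons_succ, hcdef]
  have hPy : ∀ t : ℝ, (∏ j, |Fin.cons t y j| ^ α j) = |t| ^ α 0 * c := by
    intro t
    rw [Fin.prod_univ_succ]
    simp [Fin.cons_zero, Fin.cons_succ, hcdef]
  calc (∫ t : ℝ, G (Fin.cons t y))
      = lambda0 (α 0) * c ^ (2 / (2 + α 0)) * ∫ t : ℝ, ‖u (Fin.cons t y)‖ ^ 2 := by
        rw [show (fun t : ℝ => G (Fin.cons t y))
            = fun t : ℝ => (lambda0 (α 0) * c ^ (2 / (2 + α 0))) * ‖u (Fin.cons t y)‖ ^ 2 from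
          funext fun t => by simp only [hG]; rw [hQy t]]
        rw [MeasureTheory.integral_const_mul]
    _ ≤ ∫ t : ℝ, (‖deriv (fun τ : ℝ => u (Fin.cons τ y)) t‖ ^ 2
          + |t| ^ α 0 * c * ‖u (Fin.cons t y)‖ ^ 2) := one_dim (hα 0) hc hvC hvS
    _ = ∫ t : ℝ, F (Fin.cons t y) := by
        congr 1
        funext t
        simp only [hF]
        rw [hPy t, hder t]
end

section
/- Let (λ_j)_{j∈ℕ} be a sequence of positive real numbers such that ∑_j exp(−t λ_j) < ∞ for every t > 0, let N(E) = #{j : λ_j ≤ E}, and suppose that for some l > 0 and c ≥ 0 one has lim_{E→∞} E^{−l} N(E) = c. Then lim_{t→0⁺} t^{l+1} ∑_j λ_j·exp(−t λ_j) = c·l·Γ(l+1), where Γ is the Gamma function. -/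
/-!
Summation by parts against the counting function `N` turns the weighted heat trace into Laplace
transforms of `N`: since `E e^{-tE}` has derivative `-(tE - 1) e^{-tE}`,
`∑ λ_j e^{-tλ_j} = t ∫₀^∞ N(E) E e^{-tE} dE - ∫₀^∞ N(E) e^{-tE} dE`.
An Abelian argument (substitute `E = u / t` and use dominated convergence, `E^{-l} N(E)` being
bounded on `(0, ∞)` because `N` vanishes below `min λ_j`) gives
`t^{s+1} ∫₀^∞ g(E) e^{-tE} dE → c Γ(s+1)` whenever `E^{-s} g(E) → c`.
Applied to `N(E) E` and `N(E)`, the two terms tend to `c Γ(l+2)` and `c Γ(l+1)`, whose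
difference is `c l Γ(l+1)`.
-/

open Filter MeasureTheory Set Real Topology

theorem tendsto_integral_comp_div_mul {φ w : ℝ → ℝ} {M c : ℝ} (hφ : Measurable φ)
    (hφM : ∀ E, 0 < E → ‖φ E‖ ≤ M) (hφc : Tendsto φ atTop (𝓝 c))
    (hw : IntegrableOn w (Ioi 0)) :
    Tendsto (fun t => ∫ u in Ioi 0, φ (u / t) * w u) (𝓝[>] 0)
      (𝓝 (c * ∫ u in Ioi 0, w u)) := by
  rw [← integral_const_mul]
  refine tendsto_integral_filter_of_dominated_convergence (fun u => M * ‖w u‖)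
    (Eventually.of_forall fun t =>
      ((hφ.comp (measurable_id.div_const t)).aestronglyMeasurable.mul hw.1)) ?_
    (hw.norm.const_mul M) ?_
  · filter_upwards [self_mem_nhdsWithin] with t ht
    filter_upwards [self_mem_ae_restrict measurableSet_Ioi] with u hu
    rw [norm_mul]
    exact mul_le_mul_of_nonneg_right (hφM _ (div_pos hu ht)) (norm_nonneg _)
  · filter_upwards [self_mem_ae_restrict measurableSet_Ioi] with u hu
    have hdiv : Tendsto (fun t => u / t) (𝓝[>] 0) atTop := by
      simpa [div_eq_mul_inv] using tendsto_inv_nhdsGT_zero.const_mul_atTop hu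
    exact (hφc.comp hdiv).mul_const (w u)

theorem rpow_mul_integral_mul_exp_neg_mul {g : ℝ → ℝ} {t : ℝ} (ht : 0 < t) (s : ℝ) :
    t ^ (s + 1) * ∫ E in Ioi 0, g E * exp (-t * E)
      = ∫ u in Ioi 0, (u / t) ^ (-s) * g (u / t) * (exp (-u) * u ^ s) := by
  have hsub := integral_comp_mul_left_Ioi (fun u => g (u / t) * exp (-u)) 0 ht
  simp only [mul_zero, smul_eq_mul, mul_div_cancel_left₀ _ ht.ne', ← neg_mul] at hsub
  rw [hsub, rpow_add_one ht.ne', mul_assoc, mul_inv_cancel_left₀ ht.ne', ← integral_const_mul]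
  refine setIntegral_congr_fun measurableSet_Ioi fun u hu => ?_
  rw [div_rpow hu.le ht.le, rpow_neg hu.le, rpow_neg ht.le]
  have := rpow_pos_of_pos hu s
  field_simp

theorem tendsto_rpow_mul_integral_mul_exp_neg_mul {g : ℝ → ℝ} {s c M : ℝ} (hs : -1 < s)
    (hg : Measurable g) (hgM : ∀ E, 0 < E → ‖E ^ (-s) * g E‖ ≤ M)
    (hgc : Tendsto (fun E => E ^ (-s) * g E) atTop (𝓝 c)) :
    Tendsto (fun t => t ^ (s + 1) * ∫ E in Ioi 0, g E * exp (-t * E)) (𝓝[>] 0)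
      (𝓝 (c * Gamma (s + 1))) := by
  have hφ : Measurable fun E => E ^ (-s) * g E := (measurable_id.pow_const _).mul hg
  have hw : IntegrableOn (fun u => exp (-u) * u ^ s) (Ioi 0) := by
    simpa [add_sub_cancel_right] using GammaIntegral_convergent (s := s + 1) (by linarith)
  rw [Gamma_eq_integral (by linarith), add_sub_cancel_right]
  refine (tendsto_integral_comp_div_mul hφ hgM hgc hw).congr' ?_
  filter_upwards [self_mem_nhdsWithin] with t ht
  exact (rpow_mul_integral_mul_exp_neg_mul ht s).symm

theorem integral_Ioi_exp_neg_mul {t : ℝ} (ht : 0 < t) (a : ℝ) :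
    ∫ E in Ioi a, exp (-t * E) = exp (-t * a) / t := by
  rw [integral_exp_mul_Ioi (neg_lt_zero.mpr ht), neg_div_neg_eq]

theorem integrableOn_Ioi_mul_exp_neg_mul {t a : ℝ} (ht : 0 < t) (ha : 0 ≤ a) :
    IntegrableOn (fun E => E * exp (-t * E)) (Ioi a) :=
  ((integrableOn_rpow_mul_exp_neg_mul_rpow (s := 1) (by norm_num) one_pos ht).mono_set
    (Ioi_subset_Ioi ha)).congr_fun (fun E _ => by simp) measurableSet_Ioi

theorem integral_Ioi_mul_exp_neg_mul {t a : ℝ} (ht : 0 < t) (ha : 0 ≤ a) :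
    ∫ E in Ioi a, E * exp (-t * E) = (a / t + 1 / t ^ 2) * exp (-t * a) := by
  have hderiv : ∀ E ∈ Ici a, HasDerivAt (fun E => -((E / t + 1 / t ^ 2) * exp (-t * E)))
      (E * exp (-t * E)) E := fun E _ => by
    refine ((((hasDerivAt_id' E).div_const t).add_const (1 / t ^ 2)).mul
      ((hasDerivAt_id' E).const_mul (-t)).exp).neg.congr_deriv ?_
    field_simp
    ring
  have hlim : Tendsto (fun E => -((E / t + 1 / t ^ 2) * exp (-t * E))) atTop (𝓝 0) := by
    have h1 := tendsto_rpow_mul_exp_neg_mul_atTop_nhds_zero 1 t ht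
    have h0 := tendsto_rpow_mul_exp_neg_mul_atTop_nhds_zero 0 t ht
    simp only [rpow_one, rpow_zero, one_mul] at h1 h0
    have := ((h1.div_const t).add (h0.const_mul (1 / t ^ 2))).neg
    rw [zero_div, mul_zero, add_zero, neg_zero] at this
    exact this.congr fun E => by ring
  rw [integral_Ioi_of_hasDerivAt_of_tendsto' hderiv (integrableOn_Ioi_mul_exp_neg_mul ht ha) hlim]
  ring

theorem summable_mul_exp_neg_mul {lam : ℕ → ℝ} (hlam : ∀ j, 0 ≤ lam j) {t : ℝ}
    (ht : 0 < t)
    (hsum : Summable fun j => exp (-(t / 2) * lam j)) :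
    Summable fun j => lam j * exp (-t * lam j) := by
  refine (hsum.mul_left (2 / t * exp (-1))).of_nonneg_of_le
    (fun j => mul_nonneg (hlam j) (exp_nonneg _)) fun j => ?_
  have key := mul_le_mul_of_nonneg_left (mul_exp_neg_le_exp_neg_one (t / 2 * lam j))
    (by positivity : 0 ≤ 2 / t * exp (-(t / 2) * lam j))
  calc lam j * exp (-t * lam j)
      = 2 / t * exp (-(t / 2) * lam j) * (t / 2 * lam j * exp (-(t / 2 * lam j))) := by
        rw [show -t * lam j = -(t / 2) * lam j + -(t / 2 * lam j) by ring, exp_add]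
        field_simp
    _ ≤ _ := key
    _ = _ := by ring

theorem rpow_neg_add_one_mul_mul_self {E : ℝ} (hE : 0 < E) (s x : ℝ) :
    E ^ (-(s + 1)) * (x * E) = E ^ (-s) * x := by
  rw [neg_add, rpow_add hE, rpow_neg_one]
  field_simp

/-- `Nat.card` of an infinite set is `0`; `{j | lam j ≤ E}` is finite once `lam → ∞`
(`countingFunction.finite_setOf_le`). -/
noncomputable def countingFunction (lam : ℕ → ℝ) (E : ℝ) : ℝ := Nat.card {j | lam j ≤ E}

theorem tendsto_atTop_of_summable_exp_neg {lam : ℕ → ℝ}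
    (h : Summable fun j => exp (-lam j)) : Tendsto lam atTop atTop :=
  tendsto_neg_atBot_iff.mp (tendsto_exp_comp_nhds_zero.mp h.tendsto_atTop_zero)

namespace countingFunction

variable {lam : ℕ → ℝ}

theorem nonneg (E : ℝ) : 0 ≤ countingFunction lam E := Nat.cast_nonneg _

theorem finite_setOf_le (h : Tendsto lam atTop atTop) (E : ℝ) : {j | lam j ≤ E}.Finite := by
  have := h.eventually (eventually_gt_atTop E)
  rw [← Nat.cofinite_eq_atTop, eventually_cofinite] at this
  simpa using this

theorem mono (h : Tendsto lam atTop atTop) : Monotone (countingFunction lam) := by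
  intro E F hEF
  simp only [countingFunction, Nat.card_coe_set_eq]
  exact_mod_cast ncard_le_ncard (fun j (hj : lam j ≤ E) => hj.trans hEF) (finite_setOf_le h F)

theorem eq_zero_of_lt {a E : ℝ} (ha : ∀ j, a ≤ lam j) (hE : E < a) :
    countingFunction lam E = 0 := by
  have : {j | lam j ≤ E} = ∅ :=
    eq_empty_of_forall_notMem fun j hj => (ha j).not_gt (lt_of_le_of_lt hj hE)
  simp [countingFunction, this]

theorem exists_bound_rpow_neg_mul (hlam : ∀ j, 0 < lam j) (h : Tendsto lam atTop atTop)
    {l c : ℝ} (hl : 0 < l)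
    (hN : Tendsto (fun E => E ^ (-l) * countingFunction lam E) atTop (𝓝 c)) :
    ∃ M, ∀ E, 0 < E → ‖E ^ (-l) * countingFunction lam E‖ ≤ M := by
  obtain ⟨j₀, hj₀⟩ := (Nat.cofinite_eq_atTop ▸ h).exists_forall_le
  obtain ⟨E₁, hE₁⟩ :=
    eventually_atTop.mp (hN.norm.eventually (eventually_le_nhds (lt_add_one ‖c‖)))
  refine ⟨max (‖c‖ + 1) ((lam j₀) ^ (-l) * countingFunction lam E₁), fun E hE => ?_⟩
  rcases lt_or_ge E (lam j₀) with hE₀ | hE₀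
  · rw [eq_zero_of_lt hj₀ hE₀, mul_zero, norm_zero]
    exact le_max_of_le_left (by positivity)
  rcases le_or_gt E₁ E with hE₁' | hE₁'
  · exact le_max_of_le_left (hE₁ E hE₁')
  · refine le_max_of_le_right ?_
    rw [norm_of_nonneg (mul_nonneg (by positivity) (nonneg E))]
    exact mul_le_mul (rpow_le_rpow_of_nonpos (hlam j₀) hE₀ (by linarith)) (mono h hE₁'.le)
      (nonneg E) (rpow_pos_of_pos (hlam j₀) _).le

theorem measurable (h : Tendsto lam atTop atTop) : Measurable (countingFunction lam) :=
  (mono h).measurable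

theorem mul_eq_tsum_indicator (h : Tendsto lam atTop atTop) (g : ℝ → ℝ) (E : ℝ) :
    countingFunction lam E * g E = ∑' j, (Ici (lam j)).indicator g E := by
  have hfin := finite_setOf_le h E
  rw [tsum_eq_sum (s := hfin.toFinset) fun j hj => indicator_of_notMem (by simpa using hj) g,
    Finset.sum_congr rfl fun j hj => indicator_of_mem (by simpa using hj) g, Finset.sum_const,
    nsmul_eq_mul, countingFunction, Nat.card_coe_set_eq, ncard_eq_toFinset_card _ hfin]

theorem integral_mul_eq_tsum {μ : Measure ℝ} (h : Tendsto lam atTop atTop) {g : ℝ → ℝ}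
    (hg : ∀ j, IntegrableOn g (Ici (lam j)) μ)
    (hgsum : Summable fun j => ∫ E in Ici (lam j), ‖g E‖ ∂μ) :
    ∫ E, countingFunction lam E * g E ∂μ = ∑' j, ∫ E in Ici (lam j), g E ∂μ := by
  have hnorm : ∀ j,
      ∫ E, ‖(Ici (lam j)).indicator g E‖ ∂μ = ∫ E in Ici (lam j), ‖g E‖ ∂μ := fun j => by
    simp_rw [norm_indicator_eq_indicator_norm, integral_indicator measurableSet_Ici]
  simp_rw [mul_eq_tsum_indicator h g, ← integral_indicator measurableSet_Ici]
  exact (integral_tsum_of_summable_integral_norm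
    (fun j => (integrable_indicator_iff measurableSet_Ici).mpr (hg j))
    (hgsum.congr fun j => (hnorm j).symm)).symm

theorem setIntegral_Ioi_zero_mul_eq_tsum (hlam : ∀ j, 0 < lam j) (h : Tendsto lam atTop atTop)
    {g : ℝ → ℝ} (hg0 : ∀ E, 0 < E → 0 ≤ g E)
    (hg : ∀ a, 0 < a → IntegrableOn g (Ioi a))
    (hgsum : Summable fun j => ∫ E in Ioi (lam j), g E) :
    ∫ E in Ioi 0, countingFunction lam E * g E = ∑' j, ∫ E in Ioi (lam j), g E := by
  have hμ : ∀ j,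
      (volume.restrict (Ioi 0)).restrict (Ici (lam j)) = volume.restrict (Ioi (lam j)) := by
    intro j
    rw [Measure.restrict_restrict measurableSet_Ici,
      inter_eq_left.mpr (Ici_subset_Ioi.mpr (hlam j)), Measure.restrict_congr_set Ioi_ae_eq_Ici]
  have hgsum' : Summable fun j => ∫ E in Ioi (lam j), ‖g E‖ := hgsum.congr fun j =>
    setIntegral_congr_fun measurableSet_Ioi fun E hE =>
      (norm_of_nonneg (hg0 E ((hlam j).trans hE))).symm
  have := integral_mul_eq_tsum (μ := volume.restrict (Ioi 0)) h
    (fun j => by rw [IntegrableOn, hμ]; exact hg _ (hlam j)) (by simpa only [hμ] using hgsum')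
  simpa only [hμ] using this

theorem tsum_mul_exp_neg_mul_eq (hlam : ∀ j, 0 < lam j)
    (hsum : ∀ t : ℝ, 0 < t → Summable fun j => exp (-t * lam j)) {t : ℝ} (ht : 0 < t) :
    ∑' j, lam j * exp (-t * lam j)
      = t * (∫ E in Ioi 0, countingFunction lam E * (E * exp (-t * E)))
        - ∫ E in Ioi 0, countingFunction lam E * exp (-t * E) := by
  have h := tendsto_atTop_of_summable_exp_neg (by simpa using hsum 1 one_pos)
  have hexp := hsum t ht
  have hmul := summable_mul_exp_neg_mul (fun j => (hlam j).le) ht (hsum _ (half_pos ht))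
  have hsum0 : Summable fun j => exp (-t * lam j) / t := hexp.div_const t
  have hsum1 : Summable fun j => (lam j / t + 1 / t ^ 2) * exp (-t * lam j) :=
    ((hmul.div_const t).add (hexp.mul_left (1 / t ^ 2))).congr fun j => by ring
  have hI0 := setIntegral_Ioi_zero_mul_eq_tsum hlam h (fun E _ => (exp_pos _).le)
    (fun a _ => exp_neg_integrableOn_Ioi a ht)
    (by simpa only [integral_Ioi_exp_neg_mul ht] using hsum0)
  have hI1 := setIntegral_Ioi_zero_mul_eq_tsum hlam h (g := fun E => E * exp (-t * E))
    (fun E hE => mul_nonneg hE.le (exp_pos _).le)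
    (fun a ha => integrableOn_Ioi_mul_exp_neg_mul ht ha.le)
    (by simpa only [integral_Ioi_mul_exp_neg_mul ht (hlam _).le] using hsum1)
  rw [hI0, hI1]
  simp only [integral_Ioi_exp_neg_mul ht, integral_Ioi_mul_exp_neg_mul ht (hlam _).le]
  rw [← tsum_mul_left, ← (hsum1.mul_left t).tsum_sub hsum0]
  congr 1
  funext j
  field_simp
  ring

end countingFunction

theorem heat_trace_derivative_asymptotics_general
    (lam : ℕ → ℝ) (hlam : ∀ j, 0 < lam j)
    (hsum : ∀ t : ℝ, 0 < t → Summable fun j => Real.exp (-t * lam j))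
    (l c : ℝ) (hl : 0 < l)
    (hN : Tendsto (fun E : ℝ => E ^ (-l) * (Nat.card {j : ℕ | lam j ≤ E} : ℝ))
      atTop (nhds c)) :
    Tendsto (fun t : ℝ => t ^ (l + 1) * ∑' j, lam j * Real.exp (-t * lam j))
      (nhdsWithin 0 (Set.Ioi 0)) (nhds (c * l * Real.Gamma (l + 1))) := by
  have hlam_top := tendsto_atTop_of_summable_exp_neg (by simpa using hsum 1 one_pos)
  change Tendsto (fun E => E ^ (-l) * countingFunction lam E) atTop (𝓝 c) at hN
  obtain ⟨M, hM⟩ := countingFunction.exists_bound_rpow_neg_mul hlam hlam_top hl hN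
  have hmeas := countingFunction.measurable hlam_top
  have h0 := tendsto_rpow_mul_integral_mul_exp_neg_mul (by linarith) hmeas hM hN
  have h1 := tendsto_rpow_mul_integral_mul_exp_neg_mul (s := l + 1)
    (g := fun E => countingFunction lam E * E) (by linarith) (hmeas.mul measurable_id)
    (fun E hE => by rw [rpow_neg_add_one_mul_mul_self hE]; exact hM E hE)
    (hN.congr' (by
      filter_upwards [eventually_gt_atTop 0] with E hE
      rw [rpow_neg_add_one_mul_mul_self hE]))
  simp only [mul_assoc] at h1
  have hlim : c * Gamma (l + 1 + 1) - c * Gamma (l + 1) = c * l * Gamma (l + 1) := by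
    rw [Gamma_add_one (by linarith)]
    ring
  refine hlim ▸ (h1.sub h0).congr' ?_
  filter_upwards [self_mem_nhdsWithin] with t ht
  rw [countingFunction.tsum_mul_exp_neg_mul_eq hlam hsum ht, rpow_add_one ht.ne']
  ring

/-- Lemma 9 d) of the paper in abstract form: if `E^{−l} N(E) → c`, then
`t^{l+1} ∑_j λ_j e^{−tλ_j} → c l Γ(l+1)` as `t → 0⁺`. -/
theorem heat_trace_derivative_asymptotics
    (lam : ℕ → ℝ) (hlam : ∀ j, 0 < lam j)
    (hsum : ∀ t : ℝ, 0 < t → Summable fun j => Real.exp (-t * lam j))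
    (l c : ℝ) (hl : 0 < l) (hc : 0 ≤ c)
    (hN : Tendsto (fun E : ℝ => E ^ (-l) * (Nat.card {j : ℕ | lam j ≤ E} : ℝ))
      atTop (nhds c)) :
    Tendsto (fun t : ℝ => t ^ (l + 1) * ∑' j, lam j * Real.exp (-t * lam j))
      (nhdsWithin 0 (Set.Ioi 0)) (nhds (c * l * Real.Gamma (l + 1))) :=
  heat_trace_derivative_asymptotics_general lam hlam hsum l c hl hN
end
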